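/- A blockIAF map g: ℝ^d → ℝ^d is a bijection, and its inverse is given blockwise and recursively by [g^{−1}(φ)]_{B_i} = ([φ]_{B_i} − μ_i) ⊘ σ(α_i), where α_i, μ_i are evaluated at the entries of g^{−1}(φ) in the preceding blocks B_1,…,B_{i−1} and ⊘ denotes elementwise division. -/
import Mathlib

/-- Partial inverse construction for blockIAF: `pInv blk σ a m n φ` inverts
the map on all coordinates in blocks of index `< n`, leaving others as `φ`. -/
noncomputable def pInv {d B : ℕ} (blk : Fin d → Fin B) (σ : ℝ → ℝ)
    (a m : Fin d → (Fin d → ℝ) → ℝ) : ℕ → (Fin d → ℝ) → (Fin d → ℝ)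
  | 0 => fun φ => φ
  | n+1 => fun φ j =>
      if (blk j : ℕ) ≤ n then
        (φ j - m j (pInv blk σ a m n φ)) / σ (a j (pInv blk σ a m n φ))
      else φ j

lemma pInv_succ {d B : ℕ} (blk : Fin d → Fin B) (σ : ℝ → ℝ)
    (a m : Fin d → (Fin d → ℝ) → ℝ) (n : ℕ) (φ : Fin d → ℝ) (j : Fin d) :
    pInv blk σ a m (n+1) φ j =
      if (blk j : ℕ) ≤ n then
        (φ j - m j (pInv blk σ a m n φ)) / σ (a j (pInv blk σ a m n φ))
      else φ j := rfl

lemma pInv_stable {d B : ℕ} (blk : Fin d → Fin B) (σ : ℝ → ℝ)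
    (a m : Fin d → (Fin d → ℝ) → ℝ)
    (ha_dep : ∀ j (z z' : Fin d → ℝ),
      (∀ k, blk k < blk j → z k = z' k) → a j z = a j z')
    (hm_dep : ∀ j (z z' : Fin d → ℝ),
      (∀ k, blk k < blk j → z k = z' k) → m j z = m j z') :
    ∀ n (φ : Fin d → ℝ) (j : Fin d), (blk j : ℕ) < n →
      pInv blk σ a m (n+1) φ j = pInv blk σ a m n φ j := by
  intro n
  induction n using Nat.strong_induction_on with
  | _ n ih =>
    intro φ j hj
    match n, hj with
    | k+1, hj =>
      have hj' : (blk j : ℕ) ≤ k := Nat.lt_succ_iff.mp hj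
      have hagree : ∀ l, blk l < blk j →
          pInv blk σ a m (k+1) φ l = pInv blk σ a m k φ l := by
        intro l hl
        exact ih k (Nat.lt_succ_self k) φ l (lt_of_lt_of_le hl hj')
      have hm' : m j (pInv blk σ a m (k+1) φ) = m j (pInv blk σ a m k φ) :=
        hm_dep j _ _ hagree
      have ha' : a j (pInv blk σ a m (k+1) φ) = a j (pInv blk σ a m k φ) :=
        ha_dep j _ _ hagree
      rw [pInv_succ, pInv_succ, if_pos (Nat.le_succ_of_le hj'), if_pos hj', hm', ha']

lemma pInv_agree {d B : ℕ} (blk : Fin d → Fin B) (σ : ℝ → ℝ)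
    (a m : Fin d → (Fin d → ℝ) → ℝ)
    (ha_dep : ∀ j (z z' : Fin d → ℝ),
      (∀ k, blk k < blk j → z k = z' k) → a j z = a j z')
    (hm_dep : ∀ j (z z' : Fin d → ℝ),
      (∀ k, blk k < blk j → z k = z' k) → m j z = m j z') :
    ∀ n n' (φ : Fin d → ℝ) (j : Fin d), (blk j : ℕ) < n → n ≤ n' →
      pInv blk σ a m n' φ j = pInv blk σ a m n φ j := by
  intro n n' φ j hj hle
  induction n', hle using Nat.le_induction with
  | base => rfl
  | succ n' hle ih =>
    rw [pInv_stable blk σ a m ha_dep hm_dep n' φ j (lt_of_lt_of_le hj hle), ih]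

/-- **blockIAF is a bijection with blockwise-recursive inverse.**
The blockIAF map `g` is bijective and its inverse satisfies, blockwise,
`[g⁻¹(φ)]_{B_i} = ([φ]_{B_i} − μ_i) ⊘ σ(α_i)` where `α_i, μ_i` are evaluated
at the entries of `g⁻¹(φ)` in the preceding blocks (here `a j` and `m j`
depend only on those entries, by `ha_dep`, `hm_dep`). -/
theorem blockIAF_bijective_and_inverse_formula
    (d B : ℕ) (blk : Fin d → Fin B)
    (σ : ℝ → ℝ) (hσ_pos : ∀ x : ℝ, 0 < σ x) (hσ_diff : Differentiable ℝ σ)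
    (a m : Fin d → (Fin d → ℝ) → ℝ)
    (ha_diff : ∀ j, Differentiable ℝ (a j))
    (hm_diff : ∀ j, Differentiable ℝ (m j))
    (ha_dep : ∀ j (z z' : Fin d → ℝ),
      (∀ k, blk k < blk j → z k = z' k) → a j z = a j z')
    (hm_dep : ∀ j (z z' : Fin d → ℝ),
      (∀ k, blk k < blk j → z k = z' k) → m j z = m j z')
    (g : (Fin d → ℝ) → (Fin d → ℝ))
    (hg : ∀ (z : Fin d → ℝ) (j : Fin d), g z j = z j * σ (a j z) + m j z) :
    Function.Bijective g ∧
    ∀ (φ : Fin d → ℝ) (j : Fin d),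
      Function.invFun g φ j
        = (φ j - m j (Function.invFun g φ)) / σ (a j (Function.invFun g φ)) := by
  set Ginv : (Fin d → ℝ) → (Fin d → ℝ) := pInv blk σ a m B with hGinv
  -- the recursive formula for Ginv
  have hformula : ∀ (φ : Fin d → ℝ) (j : Fin d),
      Ginv φ j = (φ j - m j (Ginv φ)) / σ (a j (Ginv φ)) := by
    intro φ j
    have hjB : (blk j : ℕ) < B := (blk j).isLt
    have h1 : Ginv φ j = pInv blk σ a m ((blk j : ℕ) + 1) φ j := by
      rw [hGinv,
        pInv_agree blk σ a m ha_dep hm_dep ((blk j : ℕ)+1) B φ j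
          (Nat.lt_succ_self _) hjB]
    have hagree : ∀ l, blk l < blk j →
        pInv blk σ a m (blk j : ℕ) φ l = Ginv φ l := by
      intro l hl
      rw [hGinv,
        pInv_agree blk σ a m ha_dep hm_dep ((blk l : ℕ)+1) B φ l
          (Nat.lt_succ_self _) (blk l).isLt,
        pInv_agree blk σ a m ha_dep hm_dep ((blk l : ℕ)+1) (blk j : ℕ) φ l
          (Nat.lt_succ_self _) hl]
    rw [h1, pInv_succ, if_pos le_rfl, hm_dep j _ _ hagree, ha_dep j _ _ hagree]
  -- g ∘ Ginv = id
  have hright : ∀ φ, g (Ginv φ) = φ := by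
    intro φ
    funext j
    rw [hg, hformula φ j, div_mul_cancel₀ _ (ne_of_gt (hσ_pos _))]
    ring
  -- injectivity
  have hinj : Function.Injective g := by
    intro z z' hzz
    have key : ∀ n : ℕ, ∀ j : Fin d, (blk j : ℕ) < n → z j = z' j := by
      intro n
      induction n using Nat.strong_induction_on with
      | _ n ih =>
        intro j hj
        have hagree : ∀ k, blk k < blk j → z k = z' k := by
          intro k hk
          exact ih (blk j : ℕ) hj k hk
        have ha' : a j z = a j z' := ha_dep j _ _ hagree
        have hm' : m j z = m j z' := hm_dep j _ _ hagree
        have := congrFun hzz j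
        rw [hg, hg, ha', hm'] at this
        have h2 : z j * σ (a j z') = z' j * σ (a j z') := by linarith
        exact mul_right_cancel₀ (ne_of_gt (hσ_pos _)) h2
    funext j
    exact key B j (blk j).isLt
  have hsurj : Function.Surjective g := fun φ => ⟨Ginv φ, hright φ⟩
  have hinv : ∀ φ, Function.invFun g φ = Ginv φ := by
    intro φ
    apply hinj
    rw [Function.invFun_eq (hsurj φ), hright]
  refine ⟨⟨hinj, hsurj⟩, fun φ j => ?_⟩
  rw [hinv, hformula]
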